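/- arXiv:2502.06912 — 3 statements merged into one kernel-verified Lean document; each statement's English description precedes it below -/
import Mathlib

section
/- Let L be a finite lattice whose cover graph has nullity k ≥ 1. Then 2 ≤ |Red(L)| ≤ 2k, where Red(L) is the set of reducible elements of L. -/
/-- An element of a lattice is join-reducible if it is the join of two elements
both distinct from it. -/
def JoinReducible {α : Type*} [Lattice α] (x : α) : Prop :=
  ∃ y z : α, y ≠ x ∧ z ≠ x ∧ y ⊔ z = x

/-- An element of a lattice is meet-reducible if it is the meet of two elements
both distinct from it. -/
def MeetReducible {α : Type*} [Lattice α] (x : α) : Prop :=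
  ∃ y z : α, y ≠ x ∧ z ≠ x ∧ y ⊓ z = x

/-- An element is reducible if it is join-reducible or meet-reducible. -/
def Reducible {α : Type*} [Lattice α] (x : α) : Prop :=
  JoinReducible x ∨ MeetReducible x

/-- `Red(L)`: the set of reducible elements of the lattice. -/
def RedSet (α : Type*) [Lattice α] : Set α := {x | Reducible x}

/-- `Irr(L)`: the set of doubly irreducible (i.e. non-reducible) elements. -/
def IrrSet (α : Type*) [Lattice α] : Set α := {x | ¬ Reducible x}

/-- The cover graph of a poset: vertices are the elements, edges are covering pairs. -/
def coverGraph (α : Type*) [PartialOrder α] : SimpleGraph α where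
  Adj x y := x ⋖ y ∨ y ⋖ x
  symm := ⟨fun _ _ h => h.symm⟩
  loopless := ⟨fun x h => by rcases h with h | h <;> exact h.lt.false⟩

/-- The nullity of a (finite) poset: `m - n + c` where `m` is the number of edges,
`n` the number of vertices and `c` the number of connected components of the cover graph. -/
noncomputable def nullity (α : Type*) [PartialOrder α] : ℤ :=
  (Nat.card (coverGraph α).edgeSet : ℤ) - (Nat.card α : ℤ)
    + (Nat.card (coverGraph α).ConnectedComponent : ℤ)

/-!
The cover graph of a finite lattice is connected (every element descends along covers to `⊥`),
so its nullity is `m - n + 1`. Counting the `m` edges by their upper endpoints, every element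
other than `⊥` has a lower cover and every join-reducible element has at least two, so at most
`k` elements are join-reducible; dually at most `k` are meet-reducible. If `k ≥ 1` the lattice
is not a chain, since in a chain every element has at most one lower cover and `m ≤ n - 1`;
two incomparable elements `a`, `b` then give the distinct reducible elements `a ⊓ b`, `a ⊔ b`.
-/

open Finset SimpleGraph
open scoped Classical

section CoverGraph

variable {α : Type*} [PartialOrder α]

theorem coverGraph_eq_hasse : coverGraph α = hasse α := rfl

theorem nullity_orderDual : nullity αᵒᵈ = nullity α := by
  simp only [nullity, coverGraph_eq_hasse]
  rw [Nat.card_congr hasseDualIso.mapEdgeSet, Nat.card_congr hasseDualIso.connectedComponentEquiv]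
  rfl

variable [Fintype α]

theorem coverGraph_degree (x : α) :
    (coverGraph α).degree x = #{y | x ⋖ y} + #{y | y ⋖ x} := by
  rw [← card_neighborFinset_eq_degree, ← card_union_of_disjoint]
  · congr 1
    ext y
    simp only [mem_neighborFinset, mem_union, mem_filter, mem_univ, true_and]
    rfl
  · exact disjoint_left.2 fun y hxy hyx => (mem_filter.1 hxy).2.lt.not_gt (mem_filter.1 hyx).2.lt

theorem sum_card_upperCovers : ∑ x : α, #{y | x ⋖ y} = ∑ x : α, #{y | y ⋖ x} := by
  simp only [card_filter]
  exact sum_comm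

theorem card_edgeFinset_coverGraph : #(coverGraph α).edgeFinset = ∑ x : α, #{y | y ⋖ x} := by
  have h := sum_degrees_eq_twice_card_edges (coverGraph α)
  simp only [coverGraph_degree, sum_add_distrib, sum_card_upperCovers] at h
  omega

theorem coverGraph_reachable_bot [OrderBot α] (x : α) : (coverGraph α).Reachable x ⊥ := by
  induction x using WellFoundedLT.induction with
  | ind x ih =>
    obtain rfl | hx := eq_or_ne x ⊥
    · rfl
    · obtain ⟨y, -, hyx⟩ := exists_le_covBy_of_lt (bot_lt_iff_ne_bot.2 hx)
      exact (Adj.reachable (Or.inr hyx)).trans (ih y hyx.lt)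

theorem coverGraph_connected [OrderBot α] : (coverGraph α).Connected :=
  .mk fun x y => (coverGraph_reachable_bot x).trans (coverGraph_reachable_bot y).symm

theorem nullity_eq_sum_card_lowerCovers [OrderBot α] :
    nullity α = ∑ x : α, (#{y | y ⋖ x} : ℤ) - Fintype.card α + 1 := by
  rw [nullity, Nat.card_eq_fintype_card, ← edgeFinset_card, card_edgeFinset_coverGraph,
    Nat.card_eq_fintype_card, Nat.card_eq_one_iff_unique.2
      ⟨coverGraph_connected.preconnected.subsingleton_connectedComponent, inferInstance⟩]
  push_cast
  ring

theorem card_lowerCovers_pos [OrderBot α] {x : α} (hx : x ≠ ⊥) : 0 < #{y | y ⋖ x} := by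
  obtain ⟨y, -, hyx⟩ := exists_le_covBy_of_lt (bot_lt_iff_ne_bot.2 hx)
  exact card_pos.2 ⟨y, by simpa using hyx⟩

theorem card_lowerCovers_le_one_of_total (h : ∀ a b : α, a ≤ b ∨ b ≤ a) (x : α) :
    #{y | y ⋖ x} ≤ 1 := by
  refine card_le_one.2 fun y hy z hz => ?_
  simp only [mem_filter, mem_univ, true_and] at hy hz
  rcases h y z with hyz | hzy
  · exact hyz.eq_of_not_lt fun hlt => hy.2 hlt hz.lt
  · exact (hzy.eq_of_not_lt fun hlt => hz.2 hlt hy.lt).symm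

theorem sum_card_lowerCovers_le_of_total [OrderBot α] (h : ∀ a b : α, a ≤ b ∨ b ≤ a) :
    ∑ x : α, #{y | y ⋖ x} ≤ Fintype.card α - 1 := by
  have hbot : #{y | y ⋖ (⊥ : α)} = 0 :=
    card_eq_zero.2 (filter_eq_empty_iff.2 fun _ _ => not_covBy_bot)
  rw [← card_univ, ← card_erase_of_mem (mem_univ ⊥), ← add_sum_erase _ _ (mem_univ ⊥), hbot,
    zero_add, card_eq_sum_ones]
  exact sum_le_sum fun x _ => card_lowerCovers_le_one_of_total h x

end CoverGraph

section Lattice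

variable {α : Type*} [Lattice α]

theorem JoinReducible.ne_bot [OrderBot α] {x : α} (hx : JoinReducible x) : x ≠ ⊥ := by
  rintro rfl
  obtain ⟨y, z, hy, -, hyz⟩ := hx
  exact hy (le_bot_iff.1 (hyz ▸ le_sup_left))

theorem joinReducible_sup {a b : α} (hab : ¬a ≤ b) (hba : ¬b ≤ a) : JoinReducible (a ⊔ b) :=
  ⟨a, b, fun h => hba (h ▸ le_sup_right), fun h => hab (h ▸ le_sup_left), rfl⟩

theorem meetReducible_inf {a b : α} (hab : ¬a ≤ b) (hba : ¬b ≤ a) : MeetReducible (a ⊓ b) :=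
  joinReducible_sup (α := αᵒᵈ) hba hab

variable [Fintype α]

theorem two_le_ncard_redSet {a b : α} (hab : ¬a ≤ b) (hba : ¬b ≤ a) : 2 ≤ (RedSet α).ncard := by
  have hne : a ⊓ b ≠ a ⊔ b := fun h => hab (le_sup_left.trans (h.symm.le.trans inf_le_right))
  calc 2 = ({a ⊓ b, a ⊔ b} : Set α).ncard := (Set.ncard_pair hne).symm
    _ ≤ (RedSet α).ncard := by
      refine Set.ncard_le_ncard ?_ (Set.toFinite _)
      rintro x (rfl | rfl)
      exacts [Or.inr (meetReducible_inf hab hba), Or.inl (joinReducible_sup hab hba)]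

theorem JoinReducible.one_lt_card_lowerCovers {x : α} (hx : JoinReducible x) :
    1 < #{y | y ⋖ x} := by
  obtain ⟨y, z, hy, hz, rfl⟩ := hx
  obtain ⟨u, hyu, hu⟩ := exists_le_covBy_of_lt (lt_of_le_of_ne le_sup_left hy)
  obtain ⟨v, hzv, hv⟩ := exists_le_covBy_of_lt (lt_of_le_of_ne le_sup_right hz)
  refine one_lt_card.2 ⟨u, by simpa using hu, v, by simpa using hv, ?_⟩
  rintro rfl
  exact hu.lt.not_ge (sup_le hyu hzv)

theorem card_joinReducible_add_le [OrderBot α] :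
    #{x : α | JoinReducible x} + (Fintype.card α - 1) ≤ ∑ x : α, #{y | y ⋖ x} := by
  rw [← card_univ, ← card_erase_of_mem (mem_univ ⊥), ← filter_ne', card_filter, card_filter,
    ← sum_add_distrib]
  refine sum_le_sum fun x _ => ?_
  by_cases hx : x = ⊥
  · subst hx
    have hbot : ¬JoinReducible (⊥ : α) := fun h => h.ne_bot rfl
    simp [hbot]
  · by_cases hj : JoinReducible x
    · simp only [if_pos hj, if_pos hx]
      exact hj.one_lt_card_lowerCovers
    · simp only [if_neg hj, if_pos hx]
      exact card_lowerCovers_pos hx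

variable [Nonempty α]

theorem ncard_joinReducible_le_nullity : ({x : α | JoinReducible x}.ncard : ℤ) ≤ nullity α := by
  have := Fintype.toOrderBot α
  have h := card_joinReducible_add_le (α := α)
  have hcard : {x : α | JoinReducible x}.ncard = #{x : α | JoinReducible x} := by
    rw [← coe_filter_univ, Set.ncard_coe_finset]
  rw [nullity_eq_sum_card_lowerCovers, hcard]
  have hn : 0 < Fintype.card α := Fintype.card_pos
  push_cast [← Nat.cast_sum]
  omega

theorem ncard_meetReducible_le_nullity : ({x : α | MeetReducible x}.ncard : ℤ) ≤ nullity α := by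
  rw [← nullity_orderDual]
  exact ncard_joinReducible_le_nullity (α := αᵒᵈ)

theorem ncard_redSet_le_two_mul_nullity : ((RedSet α).ncard : ℤ) ≤ 2 * nullity α := by
  have hunion : RedSet α = {x | JoinReducible x} ∪ {x | MeetReducible x} := rfl
  have h := Set.ncard_union_le {x : α | JoinReducible x} {x | MeetReducible x}
  rw [← hunion] at h
  linarith [ncard_joinReducible_le_nullity (α := α), ncard_meetReducible_le_nullity (α := α)]

theorem nullity_nonpos_of_total (h : ∀ a b : α, a ≤ b ∨ b ≤ a) : nullity α ≤ 0 := by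
  have := Fintype.toOrderBot α
  have hsum := sum_card_lowerCovers_le_of_total h
  have hn : 0 < Fintype.card α := Fintype.card_pos
  rw [nullity_eq_sum_card_lowerCovers]
  push_cast [← Nat.cast_sum]
  omega

theorem two_le_ncard_redSet_of_nullity_pos (h : 0 < nullity α) : 2 ≤ (RedSet α).ncard := by
  have hincomparable : ∃ a b : α, ¬a ≤ b ∧ ¬b ≤ a := by
    by_contra! htotal
    exact h.not_ge (nullity_nonpos_of_total fun a b => or_iff_not_imp_left.2 (htotal a b))
  obtain ⟨a, b, hab, hba⟩ := hincomparable
  exact two_le_ncard_redSet hab hba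

end Lattice

/-- If `L` is a finite lattice whose cover graph has nullity `k ≥ 1`, then
`2 ≤ |Red(L)| ≤ 2k`. -/
theorem stmt0 {α : Type*} [Lattice α] [Fintype α] (k : ℕ) (hk : 1 ≤ k)
    (hnull : nullity α = (k : ℤ)) :
    2 ≤ (RedSet α).ncard ∧ (RedSet α).ncard ≤ 2 * k := by
  obtain hα | hα := isEmpty_or_nonempty α
  · have h0 : nullity α = 0 := by simp [nullity]
    omega
  · refine ⟨two_le_ncard_redSet_of_nullity_pos (by omega), ?_⟩
    have := ncard_redSet_le_two_mul_nullity (α := α)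
    omega
end

section
/- A finite lattice is dismantlable if and only if it is an adjunct of chains, i.e., there exist chains C₀, C₁, …, C_k and adjunct pairs (aᵢ, bᵢ) such that L = C₀ ]^{b₁}_{a₁} C₁ ]^{b₂}_{a₂} C₂ ⋯ ]^{b_k}_{a_k} C_k. -/
/-- A subset of a lattice closed under meets and joins (a sublattice). -/
def IsSublatticeSet {α : Type*} [Lattice α] (s : Set α) : Prop :=
  ∀ x ∈ s, ∀ y ∈ s, x ⊓ y ∈ s ∧ x ⊔ y ∈ s

/-- A finite lattice of order `n` is dismantlable if there is a chain
`L₁ ⊂ L₂ ⊂ ⋯ ⊂ Lₙ = L` of sublattices with `|Lᵢ| = i`. -/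
def Dismantlable (α : Type*) [Lattice α] [Fintype α] : Prop :=
  ∃ f : ℕ → Set α,
    (∀ i, 1 ≤ i → i ≤ Fintype.card α → (f i).ncard = i ∧ IsSublatticeSet (f i)) ∧
    (∀ i, 1 ≤ i → i < Fintype.card α → f i ⊆ f (i + 1)) ∧
    f (Fintype.card α) = Set.univ

/-- `AdjunctRep C₀ s l` : the subset `s`, with the order induced from the ambient
lattice, is an adjunct of chains starting with the chain `C₀`; the list `l` records, in
order, the adjoined chains together with their adjunct pairs, i.e.
`s = C₀ ]^{b₁}_{a₁} C₁ ]^{b₂}_{a₂} C₂ ⋯ ]^{b_k}_{a_k} C_k` with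
`l = [(C₁,a₁,b₁), …, (C_k,a_k,b_k)]`.  In the step, the adjunct pair `(a,b)` lies in
the part `s` built so far, with `a < b` and `a` not covered by `b` in `s`, and the
ambient order on `s ∪ c` is exactly the adjunct order: for `x ∈ s` and `y ∈ c`,
`x ≤ y ↔ x ≤ a` and `y ≤ x ↔ b ≤ x`. -/
inductive AdjunctRep {α : Type*} [Lattice α] (C₀ : Set α) :
    Set α → List (Set α × α × α) → Prop
  | base (hchain : IsChain (· ≤ ·) C₀) (hne : C₀.Nonempty) : AdjunctRep C₀ C₀ []
  | step {s : Set α} {l : List (Set α × α × α)} (c : Set α) (a b : α)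
      (hs : AdjunctRep C₀ s l) (hc : IsChain (· ≤ ·) c) (hcne : c.Nonempty)
      (hdisj : Disjoint s c) (ha : a ∈ s) (hb : b ∈ s) (hab : a < b)
      (hnotcov : ∃ z ∈ s, a < z ∧ z < b)
      (hord : ∀ x ∈ s, ∀ y ∈ c, (x ≤ y ↔ x ≤ a) ∧ (y ≤ x ↔ b ≤ x)) :
      AdjunctRep C₀ (s ∪ c) (l ++ [(c, a, b)])

/-!
A dismantling adds one element `x` at a time to a finite sublattice `s` so that `insert x s` is
again a sublattice. Then `x` lies above all of `s`, below all of `s`, or between the largest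
`d ∈ s` below it and the smallest `u ∈ s` above it. In the first two cases `x` joins the base
chain. If some element of `s` lies strictly between `d` and `u`, then `x` is adjoined as a
one-element chain with adjunct pair `(d, u)`. Otherwise `d` is covered by `u` in `s`, and `x` is
inserted into the last adjoined chain that meets `{d, u}` (the base chain if there is none).

Conversely, the largest element of the last adjoined chain is both meet- and join-irreducible, so
removing it leaves a sublattice that is again an adjunct of chains.
-/

theorem Set.exists_insert_eq_of_subset_of_ncard_eq_succ {α : Type*} {s t : Set α} (h : s ⊆ t)
    (ht : t.Finite) (hcard : t.ncard = s.ncard + 1) : ∃ x ∉ s, insert x s = t := by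
  obtain ⟨x, hxt, hxs⟩ :=
    Set.exists_mem_notMem_of_ncard_lt_ncard (s := s) (t := t) (by omega) (ht.subset h)
  refine ⟨x, hxs, Set.eq_of_subset_of_ncard_le (Set.insert_subset hxt h) ?_ ht⟩
  rw [Set.ncard_insert_of_notMem hxs (ht.subset h), hcard]

theorem le_or_le_of_notMem_Ioo {α : Type*} [Preorder α] {x y d u : α} (hD : y ≤ x ↔ y ≤ d)
    (hU : x ≤ y ↔ u ≤ y) (hd : y ≤ d ∨ d ≤ y) (hu : y ≤ u ∨ u ≤ y) (hy : y ∉ Set.Ioo d u) :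
    x ≤ y ∨ y ≤ x := by
  rw [hD, hU]
  by_contra! h
  exact hy ⟨lt_of_le_not_ge (hd.resolve_left h.2) h.2, lt_of_le_not_ge (hu.resolve_right h.1) h.1⟩

theorem SupClosed.exists_isGreatest {α : Type*} [SemilatticeSup α] {s : Set α}
    (hs : SupClosed s) (hfin : s.Finite) (hne : s.Nonempty) : ∃ d, IsGreatest s d :=
  ⟨hfin.toFinset.sup' (by simpa) id, hs.finsetSup'_mem _ (by simp),
    fun _ hy => Finset.le_sup' id (by simpa)⟩

section PartialOrder
variable {α : Type*} [PartialOrder α]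

structure IsAdjunctStep (s c : Set α) (a b : α) : Prop where
  isChain : IsChain (· ≤ ·) c
  nonempty : c.Nonempty
  disjoint : Disjoint s c
  left_mem : a ∈ s
  right_mem : b ∈ s
  lt : a < b
  exists_between : ∃ z ∈ s, a < z ∧ z < b
  le_iff : ∀ x ∈ s, ∀ y ∈ c, (x ≤ y ↔ x ≤ a) ∧ (y ≤ x ↔ b ≤ x)

namespace IsAdjunctStep
variable {s c : Set α} {a b x : α}

theorem left_lt (h : IsAdjunctStep s c a b) (hx : x ∈ c) : a < x :=
  ((h.le_iff a h.left_mem x hx).1.2 le_rfl).lt_of_ne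
    (by rintro rfl; exact Set.disjoint_left.1 h.disjoint h.left_mem hx)

theorem lt_right (h : IsAdjunctStep s c a b) (hx : x ∈ c) : x < b :=
  ((h.le_iff b h.right_mem x hx).2.2 le_rfl).lt_of_ne
    (by rintro rfl; exact Set.disjoint_left.1 h.disjoint h.right_mem hx)

theorem insert_left (h : IsAdjunctStep s c a b) (hxc : x ∉ c)
    (hx : ∀ y ∈ c, (x ≤ y ↔ x ≤ a) ∧ (y ≤ x ↔ b ≤ x)) : IsAdjunctStep (insert x s) c a b where
  isChain := h.isChain
  nonempty := h.nonempty
  disjoint := Set.disjoint_insert_left.2 ⟨hxc, h.disjoint⟩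
  left_mem := .inr h.left_mem
  right_mem := .inr h.right_mem
  lt := h.lt
  exists_between := h.exists_between.imp fun _ hz => ⟨.inr hz.1, hz.2⟩
  le_iff := by
    rintro z (rfl | hz)
    exacts [hx, h.le_iff z hz]

theorem insert_right (h : IsAdjunctStep s c a b) (hxs : x ∉ s)
    (hchain : IsChain (· ≤ ·) (insert x c))
    (hx : ∀ z ∈ s, (z ≤ x ↔ z ≤ a) ∧ (x ≤ z ↔ b ≤ z)) : IsAdjunctStep s (insert x c) a b where
  isChain := hchain
  nonempty := Set.insert_nonempty x c
  disjoint := Set.disjoint_insert_right.2 ⟨hxs, h.disjoint⟩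
  left_mem := h.left_mem
  right_mem := h.right_mem
  lt := h.lt
  exists_between := h.exists_between
  le_iff := by
    rintro z hz y (rfl | hy)
    exacts [hx z hz, h.le_iff z hz y hy]

theorem insert_right_of_covering {d u : α} (h : IsAdjunctStep s c a b) (hxs : x ∉ s)
    (hD : ∀ y ∈ s ∪ c, y ≤ x ↔ y ≤ d) (hU : ∀ y ∈ s ∪ c, x ≤ y ↔ u ≤ y)
    (hcov : ¬∃ z ∈ s ∪ c, d < z ∧ z < u) (hd : d ∈ c ∨ d = a) (hu : u ∈ c ∨ u = b) :
    IsAdjunctStep s (insert x c) a b := by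
  refine h.insert_right hxs (h.isChain.insert fun y hy _ => ?_) fun z hz => ⟨?_, ?_⟩
  · refine le_or_le_of_notMem_Ioo (hD y (.inr hy)) (hU y (.inr hy)) ?_ ?_
      fun hyI => hcov ⟨y, .inr hy, hyI⟩
    · rcases hd with hdc | rfl
      exacts [h.isChain.total hy hdc, .inr (h.left_lt hy).le]
    · rcases hu with huc | rfl
      exacts [h.isChain.total hy huc, .inl (h.lt_right hy).le]
  · rw [hD z (.inl hz)]
    rcases hd with hdc | rfl
    exacts [(h.le_iff z hz d hdc).1, Iff.rfl]
  · rw [hU z (.inl hz)]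
    rcases hu with huc | rfl
    exacts [(h.le_iff z hz u huc).2, Iff.rfl]

theorem mono_right {c' : Set α} (h : IsAdjunctStep s c a b) (hc : c' ⊆ c) (hne : c'.Nonempty) :
    IsAdjunctStep s c' a b where
  isChain := h.isChain.mono hc
  nonempty := hne
  disjoint := h.disjoint.mono_right hc
  left_mem := h.left_mem
  right_mem := h.right_mem
  lt := h.lt
  exists_between := h.exists_between
  le_iff z hz y hy := h.le_iff z hz y (hc hy)

end IsAdjunctStep
end PartialOrder

section Lattice
variable {α : Type*} [Lattice α]

theorem IsChain.isSublatticeSet {s : Set α} (h : IsChain (· ≤ ·) s) : IsSublatticeSet s := by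
  intro x hx y hy
  rcases h.total hx hy with hxy | hyx
  · rw [inf_eq_left.2 hxy, sup_eq_right.2 hxy]
    exact ⟨hx, hy⟩
  · rw [inf_eq_right.2 hyx, sup_eq_left.2 hyx]
    exact ⟨hy, hx⟩

namespace IsSublatticeSet
variable {s : Set α}

theorem exists_greatest_le (hs : IsSublatticeSet s) (hfin : s.Finite) {x : α}
    (h : ∃ y ∈ s, y ≤ x) : ∃ d ∈ s, ∀ y ∈ s, y ≤ x ↔ y ≤ d := by
  have hclosed : SupClosed (s ∩ Set.Iic x) :=
    fun a ha b hb => ⟨(hs a ha.1 b hb.1).2, sup_le ha.2 hb.2⟩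
  obtain ⟨d, ⟨hds, hdx⟩, hd⟩ := hclosed.exists_isGreatest (hfin.inter_of_left _) h
  exact ⟨d, hds, fun y hy => ⟨fun hyx => hd ⟨hy, hyx⟩, fun hyd => hyd.trans hdx⟩⟩

theorem exists_least_ge (hs : IsSublatticeSet s) (hfin : s.Finite) {x : α}
    (h : ∃ y ∈ s, x ≤ y) : ∃ u ∈ s, ∀ y ∈ s, x ≤ y ↔ u ≤ y :=
  exists_greatest_le (α := αᵒᵈ) (fun a ha b hb => (hs a ha b hb).symm) hfin h

theorem sdiff_singleton {M : α} (hs : IsSublatticeSet s)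
    (hinf : ∀ x ∈ s, ∀ y ∈ s, x ⊓ y = M → x = M ∨ y = M)
    (hsup : ∀ x ∈ s, ∀ y ∈ s, x ⊔ y = M → x = M ∨ y = M) : IsSublatticeSet (s \ {M}) :=
  fun x hx y hy =>
    ⟨⟨(hs x hx.1 y hy.1).1, fun h => (hinf x hx.1 y hy.1 h).elim hx.2 hy.2⟩,
      ⟨(hs x hx.1 y hy.1).2, fun h => (hsup x hx.1 y hy.1 h).elim hx.2 hy.2⟩⟩

end IsSublatticeSet

namespace IsAdjunctStep
variable {s c : Set α} {a b M x y : α}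

theorem eq_or_eq_of_inf_eq (h : IsAdjunctStep s c a b) (hM : IsGreatest c M) (hx : x ∈ s ∪ c)
    (hy : y ∈ s ∪ c) (hxy : x ⊓ y = M) : x = M ∨ y = M := by
  rcases hx with hxs | hxc
  · rcases hy with hys | hyc
    · have hb : b ≤ x ⊓ y := le_inf ((h.le_iff x hxs M hM.1).2.1 (hxy ▸ inf_le_left))
        ((h.le_iff y hys M hM.1).2.1 (hxy ▸ inf_le_right))
      exact absurd (hxy ▸ hb) (h.lt_right hM.1).not_ge
    · exact .inr (le_antisymm (hM.2 hyc) (hxy ▸ inf_le_right))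
  · exact .inl (le_antisymm (hM.2 hxc) (hxy ▸ inf_le_left))

theorem eq_or_eq_of_sup_eq (h : IsAdjunctStep s c a b) (hM : IsGreatest c M) (hx : x ∈ s ∪ c)
    (hy : y ∈ s ∪ c) (hxy : x ⊔ y = M) : x = M ∨ y = M := by
  have hle_a : ∀ z ∈ s, z ≤ M → z ≤ a := fun z hz hzM => (h.le_iff z hz M hM.1).1.1 hzM
  rcases hx with hxs | hxc <;> rcases hy with hys | hyc
  · have hMa : x ⊔ y ≤ a :=
      sup_le (hle_a x hxs (hxy ▸ le_sup_left)) (hle_a y hys (hxy ▸ le_sup_right))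
    exact absurd (hxy ▸ hMa) (h.left_lt hM.1).not_ge
  · have hxy' : x ≤ y := (h.le_iff x hxs y hyc).1.2 (hle_a x hxs (hxy ▸ le_sup_left))
    exact .inr (sup_eq_right.2 hxy' ▸ hxy)
  · have hyx : y ≤ x := (h.le_iff y hys x hxc).1.2 (hle_a y hys (hxy ▸ le_sup_right))
    exact .inl (sup_eq_left.2 hyx ▸ hxy)
  · rcases h.isChain.total hxc hyc with hxy' | hyx
    exacts [.inr (sup_eq_right.2 hxy' ▸ hxy), .inl (sup_eq_left.2 hyx ▸ hxy)]

end IsAdjunctStep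

namespace AdjunctRep
variable {C₀ s : Set α} {l : List (Set α × α × α)}

theorem adjoin {c : Set α} {a b : α} (h : AdjunctRep C₀ s l) (hstep : IsAdjunctStep s c a b) :
    AdjunctRep C₀ (s ∪ c) (l ++ [(c, a, b)]) :=
  .step c a b h hstep.1 hstep.2 hstep.3 hstep.4 hstep.5 hstep.6 hstep.7 hstep.8

@[elab_as_elim]
theorem induction_on_adjoin
    {motive : (s : Set α) → (l : List (Set α × α × α)) → AdjunctRep C₀ s l → Prop}
    (base : ∀ (hchain : IsChain (· ≤ ·) C₀) (hne : C₀.Nonempty), motive C₀ [] (.base hchain hne))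
    (adjoin : ∀ {s l c a b} (h : AdjunctRep C₀ s l) (hstep : IsAdjunctStep s c a b),
      motive s l h → motive (s ∪ c) (l ++ [(c, a, b)]) (h.adjoin hstep))
    (h : AdjunctRep C₀ s l) : motive s l h := by
  induction h with
  | base hchain hne => exact base hchain hne
  | step c a b h hc hcne hdisj ha hb hab hncov hord ih =>
    exact adjoin h ⟨hc, hcne, hdisj, ha, hb, hab, hncov, hord⟩ ih

theorem nonempty (h : AdjunctRep C₀ s l) : s.Nonempty := by
  induction h using induction_on_adjoin with
  | base _ hne => exact hne
  | adjoin _ _ ih => exact ih.mono Set.subset_union_left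

theorem insert_of_forall_le {x : α} (h : AdjunctRep C₀ s l) (hx : x ∉ s)
    (hle : ∀ y ∈ s, y ≤ x) : AdjunctRep (insert x C₀) (insert x s) l := by
  induction h using induction_on_adjoin with
  | base hchain _ =>
    exact .base (hchain.insert fun y hy _ => .inr (hle y hy)) (Set.insert_nonempty x C₀)
  | @adjoin s l c a b h hstep ih =>
    have hnle : ∀ y ∈ s ∪ c, ¬x ≤ y := fun y hy hxy => hx (le_antisymm (hle y hy) hxy ▸ hy)
    rw [← Set.insert_union]
    exact (ih (fun h => hx (.inl h)) fun y hy => hle y (.inl hy)).adjoin <|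
      hstep.insert_left (fun h => hx (.inr h)) fun y hy =>
        ⟨iff_of_false (hnle y (.inr hy)) (hnle a (.inl hstep.left_mem)),
          iff_of_true (hle y (.inr hy)) (hle b (.inl hstep.right_mem))⟩

theorem insert_of_forall_ge {x : α} (h : AdjunctRep C₀ s l) (hx : x ∉ s)
    (hge : ∀ y ∈ s, x ≤ y) : AdjunctRep (insert x C₀) (insert x s) l := by
  induction h using induction_on_adjoin with
  | base hchain _ =>
    exact .base (hchain.insert fun y hy _ => .inl (hge y hy)) (Set.insert_nonempty x C₀)
  | @adjoin s l c a b h hstep ih =>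
    have hnge : ∀ y ∈ s ∪ c, ¬y ≤ x := fun y hy hyx => hx (le_antisymm hyx (hge y hy) ▸ hy)
    rw [← Set.insert_union]
    exact (ih (fun h => hx (.inl h)) fun y hy => hge y (.inl hy)).adjoin <|
      hstep.insert_left (fun h => hx (.inr h)) fun y hy =>
        ⟨iff_of_true (hge y (.inr hy)) (hge a (.inl hstep.left_mem)),
          iff_of_false (hnge y (.inr hy)) (hnge b (.inl hstep.right_mem))⟩

theorem exists_insert_of_covering {x d u : α} (h : AdjunctRep C₀ s l) (hx : x ∉ s)
    (hd : d ∈ s) (hu : u ∈ s) (hD : ∀ y ∈ s, y ≤ x ↔ y ≤ d) (hU : ∀ y ∈ s, x ≤ y ↔ u ≤ y)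
    (hcov : ¬∃ z ∈ s, d < z ∧ z < u) : ∃ C l', AdjunctRep C (insert x s) l' := by
  induction h using induction_on_adjoin with
  | base hchain _ =>
    refine ⟨_, [], .base (hchain.insert fun y hy _ => ?_) (Set.insert_nonempty x C₀)⟩
    exact le_or_le_of_notMem_Ioo (hD y hy) (hU y hy) (hchain.total hy hd) (hchain.total hy hu)
      fun h => hcov ⟨y, hy, h⟩
  | @adjoin s l c a b h hstep ih =>
    have hxs : x ∉ s := fun h => hx (.inl h)
    by_cases hdu : d ∈ s ∧ u ∈ s
    · obtain ⟨C, l', h'⟩ := ih hxs hdu.1 hdu.2 (fun y hy => hD y (.inl hy))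
        (fun y hy => hU y (.inl hy)) fun ⟨z, hz, hdzu⟩ => hcov ⟨z, .inl hz, hdzu⟩
      refine ⟨C, l' ++ [(c, a, b)], ?_⟩
      rw [← Set.insert_union]
      refine h'.adjoin (hstep.insert_left (fun h => hx (.inr h)) fun y hy => ⟨?_, ?_⟩)
      · rw [hU y (.inr hy), (hstep.le_iff u hdu.2 y hy).1, hU a (.inl hstep.left_mem)]
      · rw [hD y (.inr hy), (hstep.le_iff d hdu.1 y hy).2, hD b (.inl hstep.right_mem)]
    -- Otherwise `d` or `u` lies in `c`, and `x` joins the chain `c`.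
    have hdu_le : d ≤ u := ((hD d hd).2 le_rfl).trans ((hU u hu).2 le_rfl)
    have hd' : d ∈ c ∨ d = a := by
      refine hd.symm.imp_right fun hds => ?_
      have huc : u ∈ c := hu.resolve_left fun hus => hdu ⟨hds, hus⟩
      exact ((hstep.le_iff d hds u huc).1.1 hdu_le).eq_of_not_lt
        fun hda => hcov ⟨a, .inl hstep.left_mem, hda, hstep.left_lt huc⟩
    have hu' : u ∈ c ∨ u = b := by
      refine hu.symm.imp_right fun hus => ?_
      have hdc : d ∈ c := hd.resolve_left fun hds => hdu ⟨hds, hus⟩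
      exact (((hstep.le_iff u hus d hdc).2.1 hdu_le).eq_of_not_lt
        fun hbu => hcov ⟨b, .inl hstep.right_mem, hstep.lt_right hdc, hbu⟩).symm
    refine ⟨C₀, l ++ [(insert x c, a, b)], ?_⟩
    rw [← Set.union_insert]
    exact h.adjoin (hstep.insert_right_of_covering hxs hD hU hcov hd' hu')

theorem exists_insert_of_between {x d u : α} (h : AdjunctRep C₀ s l) (hx : x ∉ s)
    (hd : d ∈ s) (hu : u ∈ s) (hD : ∀ y ∈ s, y ≤ x ↔ y ≤ d) (hU : ∀ y ∈ s, x ≤ y ↔ u ≤ y) :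
    ∃ C l', AdjunctRep C (insert x s) l' := by
  by_cases hcov : ∃ z ∈ s, d < z ∧ z < u
  · have hdu : d < u := let ⟨_, _, hdz, hzu⟩ := hcov; hdz.trans hzu
    refine ⟨C₀, l ++ [({x}, d, u)], ?_⟩
    rw [← Set.union_singleton]
    refine h.adjoin ⟨Set.subsingleton_singleton.isChain, Set.singleton_nonempty x,
      Set.disjoint_singleton_right.2 hx, hd, hu, hdu, hcov, ?_⟩
    rintro y hy _ rfl
    exact ⟨hD y hy, hU y hy⟩
  · exact h.exists_insert_of_covering hx hd hu hD hU hcov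

theorem exists_insert {x : α} (h : AdjunctRep C₀ s l) (hfin : s.Finite)
    (hs : IsSublatticeSet s) (hxs : IsSublatticeSet (insert x s)) (hx : x ∉ s) :
    ∃ C l', AdjunctRep C (insert x s) l' := by
  by_cases hup : ∃ y ∈ s, x ≤ y
  · by_cases hdown : ∃ y ∈ s, y ≤ x
    · obtain ⟨d, hd, hD⟩ := hs.exists_greatest_le hfin hdown
      obtain ⟨u, hu, hU⟩ := hs.exists_least_ge hfin hup
      exact h.exists_insert_of_between hx hd hu hD hU
    · refine ⟨_, _, h.insert_of_forall_ge hx fun y hy => ?_⟩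
      rcases (hxs x (.inl rfl) y (.inr hy)).1 with hxy | hxy
      · exact hxy ▸ inf_le_right
      · exact absurd ⟨_, hxy, inf_le_left⟩ hdown
  · refine ⟨_, _, h.insert_of_forall_le hx fun y hy => ?_⟩
    rcases (hxs x (.inl rfl) y (.inr hy)).2 with hxy | hxy
    · exact hxy ▸ le_sup_right
    · exact absurd ⟨_, hxy, le_sup_left⟩ hup

theorem exists_sdiff_singleton (h : AdjunctRep C₀ s l) (hfin : s.Finite)
    (hs : IsSublatticeSet s) (hnt : s.Nontrivial) :
    ∃ M ∈ s, (∃ C l', AdjunctRep C (s \ {M}) l') ∧ IsSublatticeSet (s \ {M}) := by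
  cases h using induction_on_adjoin with
  | base hchain hne =>
    obtain ⟨M, hM⟩ := hne
    have hchain' : IsChain (· ≤ ·) (C₀ \ {M}) := hchain.mono Set.sdiff_subset
    obtain ⟨y, hy, hyM⟩ := hnt.exists_ne M
    exact ⟨M, hM, ⟨_, [], .base hchain' ⟨y, hy, hyM⟩⟩, hchain'.isSublatticeSet⟩
  | @adjoin s l c a b h hstep _ =>
    obtain ⟨M, hM⟩ := SupClosed.exists_isGreatest
      (fun x hx y hy => (hstep.isChain.isSublatticeSet x hx y hy).2)
      (hfin.subset Set.subset_union_right) hstep.nonempty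
    refine ⟨M, .inr hM.1, ?_, hs.sdiff_singleton
      (fun x hx y hy => hstep.eq_or_eq_of_inf_eq hM hx hy)
      fun x hx y hy => hstep.eq_or_eq_of_sup_eq hM hx hy⟩
    rw [Set.union_sdiff_distrib, Set.sdiff_singleton_eq_self
      (Set.disjoint_right.1 hstep.disjoint hM.1)]
    rcases (c \ {M}).eq_empty_or_nonempty with hempty | hne
    · exact ⟨C₀, l, by rwa [hempty, Set.union_empty]⟩
    · exact ⟨C₀, _, h.adjoin (hstep.mono_right Set.sdiff_subset hne)⟩

end AdjunctRep

inductive IsDismantlableSet : Set α → Prop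
  | singleton (x : α) : IsDismantlableSet {x}
  | cons {s : Set α} {x : α} (hs : IsDismantlableSet s) (hx : x ∉ s)
      (hsub : IsSublatticeSet (insert x s)) : IsDismantlableSet (insert x s)

namespace IsDismantlableSet
variable {s : Set α}

theorem finite (h : IsDismantlableSet s) : s.Finite := by
  induction h with
  | singleton x => exact Set.finite_singleton x
  | cons _ _ _ ih => exact ih.insert _

theorem isSublatticeSet (h : IsDismantlableSet s) : IsSublatticeSet s := by
  induction h with
  | singleton x => exact Set.subsingleton_singleton.isChain.isSublatticeSet
  | cons _ _ hsub _ => exact hsub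

theorem exists_adjunctRep (h : IsDismantlableSet s) : ∃ C₀ l, AdjunctRep C₀ s l := by
  induction h with
  | singleton x => exact ⟨{x}, [], .base Set.subsingleton_singleton.isChain ⟨x, rfl⟩⟩
  | cons hs hx hsub ih =>
    obtain ⟨C₀, l, h⟩ := ih
    exact h.exists_insert hs.finite hs.isSublatticeSet hsub hx

theorem exists_dismantling (h : IsDismantlableSet s) :
    ∃ f : ℕ → Set α, (∀ i, 1 ≤ i → i ≤ s.ncard → (f i).ncard = i ∧ IsSublatticeSet (f i)) ∧
      (∀ i, 1 ≤ i → i < s.ncard → f i ⊆ f (i + 1)) ∧ f s.ncard = s := by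
  induction h with
  | singleton x =>
    rw [Set.ncard_singleton]
    refine ⟨fun _ => {x}, fun i hi hi' => ?_, fun i hi hi' => by omega, rfl⟩
    obtain rfl : i = 1 := by omega
    exact ⟨Set.ncard_singleton x, Set.subsingleton_singleton.isChain.isSublatticeSet⟩
  | @cons s x hs hx hsub ih =>
    obtain ⟨f, hcard, hmono, hlast⟩ := ih
    have hn : (insert x s).ncard = s.ncard + 1 := Set.ncard_insert_of_notMem hx hs.finite
    refine ⟨fun i => if i ≤ s.ncard then f i else insert x s, fun i hi hi' => ?_,
      fun i hi hi' => ?_, by simp [hn]⟩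
    · dsimp only
      split_ifs with hle
      · exact hcard i hi hle
      · exact ⟨by omega, hsub⟩
    · rw [hn] at hi'
      dsimp only
      split_ifs
      · exact hmono i hi (by omega)
      · obtain rfl : i = s.ncard := by omega
        rw [hlast]
        exact Set.subset_insert x s
      · omega
      · exact le_rfl

end IsDismantlableSet

namespace AdjunctRep
variable {C₀ s : Set α} {l : List (Set α × α × α)}

theorem isDismantlableSet (h : AdjunctRep C₀ s l) (hfin : s.Finite) (hs : IsSublatticeSet s) :
    IsDismantlableSet s := by
  induction hn : s.ncard using Nat.strong_induction_on generalizing C₀ s l with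
  | _ n ih =>
    rcases h.nonempty.exists_eq_singleton_or_nontrivial with ⟨x, rfl⟩ | hnt
    · exact .singleton x
    obtain ⟨M, hM, ⟨C, l', h'⟩, hs'⟩ := h.exists_sdiff_singleton hfin hs hnt
    have hlt : (s \ {M}).ncard < n := hn ▸ Set.ncard_sdiff_singleton_lt_of_mem hM hfin
    rw [← Set.insert_sdiff_self_of_mem hM]
    refine (ih _ hlt h' hfin.sdiff hs' rfl).cons (fun hM' => hM'.2 rfl) ?_
    rwa [Set.insert_sdiff_self_of_mem hM]

end AdjunctRep

end Lattice

theorem dismantlable_iff_isDismantlableSet_univ {α : Type*} [Lattice α] [Fintype α]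
    [Nonempty α] : Dismantlable α ↔ IsDismantlableSet (Set.univ : Set α) := by
  have hcard : (Set.univ : Set α).ncard = Fintype.card α := by
    rw [Set.ncard_univ, Nat.card_eq_fintype_card]
  constructor
  · rintro ⟨f, hf, hmono, hlast⟩
    suffices ∀ i, 1 ≤ i → i ≤ Fintype.card α → IsDismantlableSet (f i) from
      hlast ▸ this _ Fintype.card_pos le_rfl
    intro i hi
    induction i, hi using Nat.le_induction with
    | base =>
      intro hn
      obtain ⟨x, hx⟩ := Set.ncard_eq_one.1 (hf 1 le_rfl hn).1
      exact hx ▸ .singleton x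
    | succ i hi ih =>
      intro hn
      obtain ⟨x, hx, heq⟩ := Set.exists_insert_eq_of_subset_of_ncard_eq_succ (hmono i hi hn)
        (Set.toFinite _) (by rw [(hf i hi (by omega)).1, (hf (i + 1) (by omega) hn).1])
      exact heq ▸ (ih (by omega)).cons hx (heq ▸ (hf (i + 1) (by omega) hn).2)
  · intro h
    obtain ⟨f, hf, hmono, hlast⟩ := h.exists_dismantling
    rw [hcard] at hf hmono hlast
    exact ⟨f, hf, hmono, hlast⟩

/-- A finite lattice is dismantlable if and only if it is an adjunct of chains. -/
theorem stmt3 {α : Type*} [Lattice α] [Fintype α] [Nonempty α] :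
    Dismantlable α ↔
      ∃ (C₀ : Set α) (l : List (Set α × α × α)), AdjunctRep C₀ Set.univ l := by
  rw [dismantlable_iff_isDismantlableSet_univ]
  refine ⟨IsDismantlableSet.exists_adjunctRep, fun ⟨C₀, l, h⟩ => ?_⟩
  exact h.isDismantlableSet Set.finite_univ fun _ _ _ _ => ⟨trivial, trivial⟩
end

section
/- Every RC-lattice contains no crown, and hence every RC-lattice is dismantlable. -/
/-- A subset `s` of a poset is a crown: for some `n ≥ 3` it consists of `2n` distinct
elements `x₁, y₁, …, xₙ, yₙ` whose only (strict) comparabilities are `xᵢ ≤ yᵢ` and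
`x_{i+1} ≤ yᵢ` (indices cyclic, so also `x₁ ≤ yₙ`). -/
def IsCrown {α : Type*} [PartialOrder α] (s : Set α) : Prop :=
  ∃ n : ℕ, 3 ≤ n ∧ ∃ x y : ZMod n → α,
    (∀ i j, x i = x j → i = j) ∧ (∀ i j, y i = y j → i = j) ∧ (∀ i j, x i ≠ y j) ∧
    s = Set.range x ∪ Set.range y ∧
    (∀ i j, x i ≤ x j ↔ i = j) ∧
    (∀ i j, y i ≤ y j ↔ i = j) ∧
    (∀ i j, x i ≤ y j ↔ (j = i ∨ i = j + 1)) ∧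
    (∀ i j, ¬ y i ≤ x j)

/-!
In a crown, `x₀ ⊔ x₁ ≤ y₀` and `x₁ ⊔ x₂ ≤ y₁`, while `x₀ ≰ y₁` and `x₂ ≰ y₀`; so these two
join-reducible elements are incomparable, which an RC-lattice forbids.

For dismantlability, every nonempty sublattice `s` of an RC-lattice has an element that is neither
a join nor a meet of two other elements of `s`: otherwise every element of `s` is reducible in the
whole lattice, hence any two of them are comparable, and a join or meet of two comparable elements
is one of them. Removing such an element leaves a sublattice, and peeling elements off one at a
time from the whole lattice gives the required chain.
-/

lemma ZMod.natCast_ne_zero_of_pos_of_lt {n k : ℕ} (hk : 0 < k) (hkn : k < n) :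
    (k : ZMod n) ≠ 0 := by
  rw [Ne, ZMod.natCast_eq_zero_iff]
  exact Nat.not_dvd_of_pos_of_lt hk hkn

lemma joinReducible_sup_of_not_le {α : Type*} [Lattice α] {a b : α}
    (hab : ¬ a ≤ b) (hba : ¬ b ≤ a) : JoinReducible (a ⊔ b) :=
  ⟨a, b, fun h => hba (h ▸ le_sup_right), fun h => hab (h ▸ le_sup_left), rfl⟩

lemma IsCrown.exists_joinReducible_not_le {α : Type*} [Lattice α] {s : Set α} (hs : IsCrown s) :
    ∃ a b : α, JoinReducible a ∧ JoinReducible b ∧ ¬ a ≤ b ∧ ¬ b ≤ a := by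
  obtain ⟨n, hn, x, y, -, -, -, -, hxx, -, hxy, -⟩ := hs
  have h1 : (1 : ZMod n) ≠ 0 := by
    exact_mod_cast ZMod.natCast_ne_zero_of_pos_of_lt (k := 1) one_pos (by omega)
  have h2 : (2 : ZMod n) ≠ 0 := by
    exact_mod_cast ZMod.natCast_ne_zero_of_pos_of_lt (k := 2) two_pos (by omega)
  have h12 : (1 : ZMod n) ≠ 2 := fun h => h1 (by linear_combination -h)
  have hx01 : ¬ x 0 ≤ x 1 := by simpa [hxx] using h1.symm
  have hx10 : ¬ x 1 ≤ x 0 := by simpa [hxx] using h1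
  have hx12 : ¬ x 1 ≤ x 2 := by simpa [hxx] using h12
  have hx21 : ¬ x 2 ≤ x 1 := by simpa [hxx] using h12.symm
  have hx0y1 : ¬ x 0 ≤ y 1 := by simp [hxy, h1, one_add_one_eq_two, h2.symm]
  have hx2y0 : ¬ x 2 ≤ y 0 := by simp [hxy, h2.symm, h12.symm]
  have ha : x 0 ⊔ x 1 ≤ y 0 :=
    sup_le ((hxy 0 0).2 (.inl rfl)) ((hxy 1 0).2 (.inr (zero_add 1).symm))
  have hb : x 1 ⊔ x 2 ≤ y 1 :=
    sup_le ((hxy 1 1).2 (.inl rfl)) ((hxy 2 1).2 (.inr one_add_one_eq_two.symm))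
  refine ⟨x 0 ⊔ x 1, x 1 ⊔ x 2, joinReducible_sup_of_not_le hx01 hx10,
    joinReducible_sup_of_not_le hx12 hx21, fun hle => hx0y1 ?_, fun hle => hx2y0 ?_⟩
  · exact le_sup_left.trans (hle.trans hb)
  · exact le_sup_right.trans (hle.trans ha)

lemma IsSublatticeSet.diff_singleton {α : Type*} [Lattice α] {s : Set α} (hs : IsSublatticeSet s)
    {a : α} (ha : ∀ u ∈ s, ∀ v ∈ s, u ≠ a → v ≠ a → u ⊔ v ≠ a ∧ u ⊓ v ≠ a) :
    IsSublatticeSet (s \ {a}) := by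
  rintro u ⟨hu, hua⟩ v ⟨hv, hva⟩
  exact ⟨⟨(hs u hu v hv).1, (ha u hu v hv hua hva).2⟩,
    ⟨(hs u hu v hv).2, (ha u hu v hv hua hva).1⟩⟩

lemma exists_isSublatticeSet_diff_singleton {α : Type*} [Lattice α]
    (hRC : ∀ x y : α, Reducible x → Reducible y → x ≤ y ∨ y ≤ x)
    {s : Set α} (hs : IsSublatticeSet s) (hne : s.Nonempty) :
    ∃ a ∈ s, IsSublatticeSet (s \ {a}) := by
  by_contra! hnone
  have hsplit : ∀ a ∈ s, ∃ u ∈ s, ∃ v ∈ s, u ≠ a ∧ v ≠ a ∧ (u ⊔ v = a ∨ u ⊓ v = a) := by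
    intro a ha
    by_contra! hirr
    exact hnone a ha (hs.diff_singleton hirr)
  have hred : ∀ a ∈ s, Reducible a := by
    intro a ha
    obtain ⟨u, -, v, -, hua, hva, hsup | hinf⟩ := hsplit a ha
    · exact .inl ⟨u, v, hua, hva, hsup⟩
    · exact .inr ⟨u, v, hua, hva, hinf⟩
  obtain ⟨a, ha⟩ := hne
  obtain ⟨u, hu, v, hv, hua, hva, hsup | hinf⟩ := hsplit a ha <;>
    rcases hRC u v (hred u hu) (hred v hv) with huv | hvu
  · exact hva (hsup ▸ (sup_eq_right.2 huv).symm)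
  · exact hua (hsup ▸ (sup_eq_left.2 hvu).symm)
  · exact hua (hinf ▸ (inf_eq_left.2 huv).symm)
  · exact hva (hinf ▸ (inf_eq_right.2 hvu).symm)

lemma Dismantlable.of_exists_isSublatticeSet_diff_singleton {α : Type*} [Lattice α] [Fintype α]
    (h : ∀ s : Set α, IsSublatticeSet s → s.Nonempty → ∃ a ∈ s, IsSublatticeSet (s \ {a})) :
    Dismantlable α := by
  classical
  set N := Fintype.card α
  let peel : Set α → Set α := fun s =>
    if hs : IsSublatticeSet s ∧ s.Nonempty then s \ {(h s hs.1 hs.2).choose} else s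
  have peel_subset (s : Set α) : peel s ⊆ s := by
    unfold peel
    split_ifs
    exacts [Set.sdiff_subset, subset_rfl]
  have peel_spec {s : Set α} (hs : IsSublatticeSet s) (hne : s.Nonempty) :
      IsSublatticeSet (peel s) ∧ (peel s).ncard = s.ncard - 1 := by
    have hspec := (h s hs hne).choose_spec
    simp only [peel, dif_pos (And.intro hs hne)]
    exact ⟨hspec.2, Set.ncard_sdiff_singleton_of_mem hspec.1⟩
  have hpeeled (k : ℕ) (hk : k ≤ N) :
      IsSublatticeSet (peel^[k] Set.univ) ∧ (peel^[k] Set.univ).ncard = N - k := by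
    induction k with
    | zero => exact ⟨fun _ _ _ _ => ⟨trivial, trivial⟩, by simp [N, Set.ncard_univ]⟩
    | succ k ih =>
      obtain ⟨hsub, hcard⟩ := ih (by omega)
      have hne : (peel^[k] Set.univ).Nonempty := by
        rw [← Set.ncard_pos]
        omega
      obtain ⟨hsub', hcard'⟩ := peel_spec hsub hne
      rw [Function.iterate_succ_apply']
      exact ⟨hsub', by omega⟩
  refine ⟨fun i => peel^[N - i] Set.univ, fun i _ hiN => ?_, fun i _ hiN => ?_, by simp [N]⟩
  · obtain ⟨hsub, hcard⟩ := hpeeled (N - i) (by omega)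
    exact ⟨by dsimp only; omega, hsub⟩
  · dsimp only
    rw [show N - i = N - (i + 1) + 1 by omega, Function.iterate_succ_apply']
    exact peel_subset _

theorem stmt6_general {α : Type*} [Lattice α] [Fintype α]
    (hRC : ∀ x y : α, Reducible x → Reducible y → x ≤ y ∨ y ≤ x) :
    (∀ s : Set α, ¬ IsCrown s) ∧ Dismantlable α := by
  refine ⟨fun s hs => ?_, .of_exists_isSublatticeSet_diff_singleton fun s hs hne =>
    exists_isSublatticeSet_diff_singleton hRC hs hne⟩
  obtain ⟨a, b, ha, hb, hab, hba⟩ := hs.exists_joinReducible_not_le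
  exact (hRC a b (.inl ha) (.inl hb)).elim hab hba

/-- An RC-lattice (a finite lattice in which any two reducible elements are comparable)
contains no crown, and hence is dismantlable. -/
theorem stmt6 {α : Type*} [Lattice α] [Fintype α] [Nonempty α]
    (hRC : ∀ x y : α, Reducible x → Reducible y → x ≤ y ∨ y ≤ x) :
    (∀ s : Set α, ¬ IsCrown s) ∧ Dismantlable α :=
  stmt6_general hRC
end
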